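/- arXiv:1108.0207 — 2 statements merged into one kernel-verified Lean document; each statement's English description precedes it below -/
import Mathlib

section
/- Let N ≥ 3, let a ∈ C²(ℝ) with a(s) ≥ ν > 0 for all s ∈ ℝ, let p > 1 and m > 0, let g be the solution of g'(s) = 1/√(a(g(s))), g(0) = 0, and let h(t) = (|g(t)|^{p−1} g(t) − m g(t))/√(a(g(t))). If u ∈ C²(ℝ^N) satisfies u > 0 in ℝ^N and −a(u)Δu − (1/2)a'(u)|∇u|² + m u = u^p pointwise in ℝ^N, then v := g⁻¹ ∘ u belongs to C²(ℝ^N), v > 0 in ℝ^N, and −Δv(x) = h(v(x)) for all x ∈ ℝ^N. -/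
open Filter Real Topology

/-- The Laplacian of `u : ℝ^N → ℝ`, as the sum of second partial derivatives. -/
noncomputable def lap {N : ℕ} (u : EuclideanSpace ℝ (Fin N) → ℝ)
    (x : EuclideanSpace ℝ (Fin N)) : ℝ :=
  ∑ i : Fin N, fderiv ℝ (fun y => fderiv ℝ u y (EuclideanSpace.single i 1)) x
    (EuclideanSpace.single i 1)

/-!
Since `g' = 1 / √(a ∘ g)`, the inverse `f = g⁻¹` satisfies `f' = √a` and `f'' = a' / (2√a)`.
The chain rule for the Laplacian gives
`Δ(f ∘ u) = f''(u) |∇u|² + f'(u) Δu = (a'(u) |∇u|² / 2 + a(u) Δu) / √(a(u))`,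
and the equation for `u` turns the numerator into `m u - u^p = -(|g(v)|^(p-1) g(v) - m g(v))`.
-/

theorem strictMono_of_hasDerivAt_one_div {g φ : ℝ → ℝ} (hφ : ∀ t, 0 < φ t)
    (hg : ∀ s, HasDerivAt g (1 / φ (g s)) s) : StrictMono g :=
  strictMono_of_deriv_pos fun s => by
    rw [(hg s).deriv]; exact one_div_pos.2 (hφ _)

theorem hasDerivAt_invFun_of_hasDerivAt_one_div {g φ : ℝ → ℝ} (hbij : Function.Bijective g)
    (hφ : ∀ t, 0 < φ t) (hg : ∀ s, HasDerivAt g (1 / φ (g s)) s) (t : ℝ) :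
    HasDerivAt (Function.invFun g) (φ t) t := by
  have hgf : ∀ t, g (Function.invFun g t) = t := Function.rightInverse_invFun hbij.2
  have hcont : Continuous (Function.invFun g) :=
    ((strictMono_of_hasDerivAt_one_div hφ hg).orderIsoOfRightInverse g _ hgf).symm.continuous
  have hgt : HasDerivAt g (1 / φ t) (Function.invFun g t) := by
    simpa only [hgf] using hg (Function.invFun g t)
  simpa using hgt.of_local_left_inverse hcont.continuousAt (one_div_pos.2 (hφ t)).ne'
    (Eventually.of_forall hgf)

theorem contDiff_two_of_hasDerivAt {f f' : ℝ → ℝ} (hf : ∀ t, HasDerivAt f (f' t) t)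
    (hf' : ContDiff ℝ 1 f') : ContDiff ℝ 2 f := by
  rw [show (2 : WithTop ℕ∞) = 1 + 1 from rfl, contDiff_succ_iff_deriv]
  refine ⟨fun t => (hf t).differentiableAt, by simp, ?_⟩
  rwa [funext fun t => (hf t).deriv]

section ChainRule

variable {E : Type*} [NormedAddCommGroup E] [NormedSpace ℝ E]
  {f f' f'' : ℝ → ℝ} {u : E → ℝ}

theorem fderiv_comp_apply_of_hasDerivAt (hf : ∀ t, HasDerivAt f (f' t) t)
    (hu : Differentiable ℝ u) (y w : E) :
    fderiv ℝ (f ∘ u) y w = f' (u y) * fderiv ℝ u y w := by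
  simp [((hf (u y)).comp_hasFDerivAt y (hu y).hasFDerivAt).fderiv]

theorem second_fderiv_comp_apply (hf : ∀ t, HasDerivAt f (f' t) t)
    (hf' : ∀ t, HasDerivAt f' (f'' t) t) (hu : Differentiable ℝ u) {x : E}
    (hu' : DifferentiableAt ℝ (fderiv ℝ u) x) (w : E) :
    fderiv ℝ (fun y => fderiv ℝ (f ∘ u) y w) x w
      = f'' (u x) * (fderiv ℝ u x w) ^ 2
        + f' (u x) * fderiv ℝ (fun y => fderiv ℝ u y w) x w := by
  have hcoef : HasFDerivAt (fun y => f' (u y)) (f'' (u x) • fderiv ℝ u x) x :=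
    (hf' (u x)).comp_hasFDerivAt x (hu x).hasFDerivAt
  have hpartial : HasFDerivAt (fun y => fderiv ℝ u y w)
      ((ContinuousLinearMap.apply ℝ ℝ w).comp (fderiv ℝ (fderiv ℝ u) x)) x :=
    (ContinuousLinearMap.apply ℝ ℝ w).hasFDerivAt.comp x hu'.hasFDerivAt
  simp only [fderiv_comp_apply_of_hasDerivAt hf hu]
  have hprod : HasFDerivAt (fun y => f' (u y) * fderiv ℝ u y w) _ x := hcoef.mul hpartial
  rw [hprod.fderiv, ← hpartial.fderiv]
  simp only [add_apply, smul_apply, smul_eq_mul]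
  ring

end ChainRule

theorem norm_gradient_sq_eq_sum {N : ℕ} (u : EuclideanSpace ℝ (Fin N) → ℝ)
    (x : EuclideanSpace ℝ (Fin N)) :
    ‖gradient u x‖ ^ 2 = ∑ i, (fderiv ℝ u x (EuclideanSpace.single i 1)) ^ 2 := by
  have hcoord : ∀ i, fderiv ℝ u x (EuclideanSpace.single i 1) = gradient u x i := by
    intro i
    rw [← InnerProductSpace.toDual_symm_apply, EuclideanSpace.inner_single_right]
    simp [gradient]
  simp_rw [hcoord, EuclideanSpace.norm_sq_eq, Real.norm_eq_abs, sq_abs]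

theorem lap_comp {N : ℕ} {f f' f'' : ℝ → ℝ} {u : EuclideanSpace ℝ (Fin N) → ℝ}
    (hf : ∀ t, HasDerivAt f (f' t) t) (hf' : ∀ t, HasDerivAt f' (f'' t) t)
    (hu : ContDiff ℝ 2 u) (x : EuclideanSpace ℝ (Fin N)) :
    lap (f ∘ u) x = f'' (u x) * ‖gradient u x‖ ^ 2 + f' (u x) * lap u x := by
  have hu' : Differentiable ℝ (fderiv ℝ u) :=
    (hu.fderiv_right (by norm_num : (1 : WithTop ℕ∞) + 1 ≤ 2)).differentiable one_ne_zero
  simp only [lap, second_fderiv_comp_apply hf hf' (hu.differentiable two_ne_zero) (hu' x),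
    norm_gradient_sq_eq_sum, Finset.sum_add_distrib, Finset.mul_sum]

theorem solution_yields_dual_solution_general
    (N : ℕ)
    (a : ℝ → ℝ) (ν : ℝ) (hν : 0 < ν)
    (ha : ContDiff ℝ 2 a) (hbound : ∀ s, ν ≤ a s)
    (p m : ℝ)
    (g : ℝ → ℝ)
    (hg : ∀ s, HasDerivAt g (1 / Real.sqrt (a (g s))) s) (hg0 : g 0 = 0)
    (hbij : Function.Bijective g)
    (h : ℝ → ℝ)
    (hh : ∀ t, h t = (|g t| ^ (p - 1) * g t - m * g t) / Real.sqrt (a (g t)))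
    (u : EuclideanSpace ℝ (Fin N) → ℝ) (hu : ContDiff ℝ 2 u)
    (hupos : ∀ x, 0 < u x)
    (hueq : ∀ x, -(a (u x) * lap u x)
        - (1 / 2) * deriv a (u x) * ‖gradient u x‖ ^ 2 + m * u x = u x ^ p) :
    ContDiff ℝ 2 (Function.invFun g ∘ u) ∧ (∀ x, 0 < (Function.invFun g ∘ u) x) ∧
    (∀ x, -lap (Function.invFun g ∘ u) x = h ((Function.invFun g ∘ u) x)) := by
  have hapos : ∀ t, 0 < a t := fun t => hν.trans_le (hbound t)
  have hsqrt : ∀ t, 0 < √(a t) := fun t => Real.sqrt_pos.2 (hapos t)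
  have hgf : ∀ t, g (Function.invFun g t) = t := Function.rightInverse_invFun hbij.2
  have hf := hasDerivAt_invFun_of_hasDerivAt_one_div hbij hsqrt hg
  have hf' : ∀ t, HasDerivAt (fun s => √(a s)) (deriv a t / (2 * √(a t))) t := fun t =>
    ((ha.differentiable two_ne_zero t).hasDerivAt.sqrt (hapos t).ne').congr_deriv (by ring)
  refine ⟨(contDiff_two_of_hasDerivAt hf
    ((ha.sqrt fun t => (hapos t).ne').of_le one_le_two)).comp hu, fun x => ?_, fun x => ?_⟩
  · exact (strictMono_of_hasDerivAt_one_div hsqrt hg).lt_iff_lt.1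
      (by simpa [hg0, hgf] using hupos x)
  · have hpow : u x ^ (p - 1) * u x = u x ^ p := by
      rw [← Real.rpow_add_one (hupos x).ne', sub_add_cancel]
    have hs0 := (hsqrt (u x)).ne'
    have hss := Real.mul_self_sqrt (hapos (u x)).le
    rw [lap_comp hf hf' hu, hh, Function.comp_apply, hgf, abs_of_pos (hupos x), hpow, ← hueq x]
    generalize √(a (u x)) = s at hs0 hss ⊢
    rw [← hss]
    field_simp
    ring

theorem solution_yields_dual_solution
    (N : ℕ) (hN : 3 ≤ N)
    (a : ℝ → ℝ) (ν : ℝ) (hν : 0 < ν)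
    (ha : ContDiff ℝ 2 a) (hbound : ∀ s, ν ≤ a s)
    (p m : ℝ) (hp : 1 < p) (hm : 0 < m)
    (g : ℝ → ℝ)
    (hg : ∀ s, HasDerivAt g (1 / Real.sqrt (a (g s))) s) (hg0 : g 0 = 0)
    (hbij : Function.Bijective g)
    (h : ℝ → ℝ)
    (hh : ∀ t, h t = (|g t| ^ (p - 1) * g t - m * g t) / Real.sqrt (a (g t)))
    (u : EuclideanSpace ℝ (Fin N) → ℝ) (hu : ContDiff ℝ 2 u)
    (hupos : ∀ x, 0 < u x)
    (hueq : ∀ x, -(a (u x) * lap u x)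
        - (1 / 2) * deriv a (u x) * ‖gradient u x‖ ^ 2 + m * u x = u x ^ p) :
    ContDiff ℝ 2 (Function.invFun g ∘ u) ∧ (∀ x, 0 < (Function.invFun g ∘ u) x) ∧
    (∀ x, -lap (Function.invFun g ∘ u) x = h ((Function.invFun g ∘ u) x)) :=
  solution_yields_dual_solution_general N a ν hν ha hbound p m g hg hg0 hbij h hh u hu hupos hueq
end

section
/- Let a₁ > 0, ψ ∈ C²(ℝ) with ψ(s) ≥ ν > 0 for all s ∈ ℝ, and p > 1. Assume either (i) k > 2 with lim_{s→+∞} s^{(2−k)/2}ψ(s) = 0 and lim_{s→+∞} s^{(4−k)/2}ψ'(s) = 0, or (ii) 0 < k ≤ 2 with ψ(s) converging to a finite positive limit and s ψ'(s) → 0 as s → +∞. Set a₀(s) = a₁|s|^k + ψ(s), let g₀ be the solution of g₀'(s) = 1/√(a₀(g₀(s))), g₀(0) = 0, and define 𝓗₂(s) = −(1/2) a₀'(g₀(s)) s g₀(s) (g₀'(s))³ + g₀(s) − p s g₀'(s). Then there exists s₂ > 0 such that 𝓗₂(s) < 0 for every s ≥ s₂. -/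
open Filter Real Topology

/-!
With `R(t) = t a₀'(t) / a₀(t)`, the decay hypotheses on `ψ` give `R(t) → k`, and `g₀ → ∞`.
Since `g₀' = 1 / √(a₀ ∘ g₀)`, we have
`H₂ = (g₀ √(a₀ ∘ g₀) - s (p + R(g₀)/2)) / √(a₀ ∘ g₀)` and
`(g₀ √(a₀ ∘ g₀))' = 1 + R(g₀)/2 → 1 + k/2 < p + k/2`,
so the numerator is eventually negative.
-/

theorem tendsto_atTop_of_hasDerivAt_of_tendsto {f f' : ℝ → ℝ} {L : ℝ}
    (hf : ∀ᶠ x in atTop, HasDerivAt f (f' x) x) (hf' : Tendsto f' atTop (𝓝 L)) (hL : 0 < L) :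
    Tendsto f atTop atTop := by
  obtain ⟨T, hT⟩ :=
    eventually_atTop.1 (hf.and (hf'.eventually (eventually_gt_nhds (half_lt_self hL))))
  have hgrowth : ∀ x ≥ T, L / 2 * (x - T) ≤ f x - f T := by
    have hderiv : ∀ x ∈ Set.Ici T, HasDerivAt f (f' x) x := fun x hx => (hT x hx).1
    refine fun x hx => (convex_Ici T).mul_sub_le_image_sub_of_le_deriv
      (fun x hx => (hderiv x hx).continuousAt.continuousWithinAt)
      (fun x hx => (hderiv x (interior_subset hx)).differentiableAt.differentiableWithinAt)
      (fun y hy => ?_) T Set.self_mem_Ici x hx hx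
    rw [(hderiv y (interior_subset hy)).deriv]
    exact (hT y (interior_subset hy)).2.le
  refine tendsto_atTop_mono' atTop (eventually_atTop.2 ⟨T, fun x hx => ?_⟩)
    (tendsto_atTop_add_const_left atTop (f T)
      ((tendsto_atTop_add_const_right atTop (-T) tendsto_id).const_mul_atTop (half_pos hL)))
  have := hgrowth x hx
  simp only [id, ← sub_eq_add_neg]
  linarith

theorem eventually_lt_mul_of_hasDerivAt_of_tendsto {f f' : ℝ → ℝ} {L m : ℝ}
    (hf : ∀ᶠ x in atTop, HasDerivAt f (f' x) x) (hf' : Tendsto f' atTop (𝓝 L)) (hLm : L < m) :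
    ∀ᶠ x in atTop, f x < m * x := by
  have hgap : Tendsto (fun x => m * x - f x) atTop atTop :=
    tendsto_atTop_of_hasDerivAt_of_tendsto (f' := fun x => m - f' x)
      (hf.mono fun x hx => (((hasDerivAt_id' x).const_mul m).sub hx).congr_deriv (by ring))
      (tendsto_const_nhds.sub hf') (sub_pos.2 hLm)
  filter_upwards [hgap.eventually_gt_atTop 0] with x hx
  linarith

theorem tendsto_atTop_of_hasDerivAt_comp {g h : ℝ → ℝ} (hh : Continuous h) (hpos : ∀ y, 0 < h y)
    (hg : ∀ s, HasDerivAt g (h (g s)) s) : Tendsto g atTop atTop := by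
  have hmono : Monotone g := (strictMono_of_hasDerivAt_pos hg fun s => hpos _).monotone
  -- a bounded solution would converge to some `l`, so `g' → h l > 0`, forcing `g → ∞`
  by_contra hnot
  have hbdd : BddAbove (Set.range g) := by
    by_contra hunbdd
    exact hnot (tendsto_atTop_atTop_of_monotone' hmono hunbdd)
  have hlim := tendsto_atTop_ciSup hmono hbdd
  exact not_tendsto_nhds_of_tendsto_atTop
    (tendsto_atTop_of_hasDerivAt_of_tendsto (Eventually.of_forall hg)
      ((hh.tendsto _).comp hlim) (hpos _)) _ hlim

theorem tendsto_rpow_mul_zero_of_lt {f : ℝ → ℝ} {a b l : ℝ}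
    (hf : Tendsto (fun s => s ^ a * f s) atTop (𝓝 l)) (hba : b < a) :
    Tendsto (fun s => s ^ b * f s) atTop (𝓝 0) := by
  have h := hf.mul (tendsto_rpow_neg_atTop (sub_pos.2 hba))
  rw [mul_zero] at h
  refine h.congr' ?_
  filter_upwards [eventually_gt_atTop 0] with s hs
  rw [mul_right_comm, ← rpow_add hs, neg_sub, add_sub_cancel]

section

variable {k a₁ : ℝ} {ψ a₀ : ℝ → ℝ}

theorem hasDerivAt_of_eq_mul_abs_rpow_add (ha₀ : ∀ s, a₀ s = a₁ * |s| ^ k + ψ s) {t : ℝ}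
    (hψ : DifferentiableAt ℝ ψ t) (ht : 0 < t) :
    HasDerivAt a₀ (a₁ * (k * t ^ (k - 1)) + deriv ψ t) t := by
  have hEq : (fun s => a₁ * s ^ k + ψ s) =ᶠ[𝓝 t] a₀ := by
    filter_upwards [eventually_gt_nhds ht] with s hs
    rw [ha₀, abs_of_pos hs]
  exact (((hasDerivAt_rpow_const (Or.inl ht.ne')).const_mul a₁).add
    hψ.hasDerivAt).congr_of_eventuallyEq hEq.symm

theorem tendsto_mul_deriv_div_self (ha₁ : 0 < a₁) (hψ : Differentiable ℝ ψ)
    (ha₀ : ∀ s, a₀ s = a₁ * |s| ^ k + ψ s)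
    (hψ₀ : Tendsto (fun s => s ^ (-k) * ψ s) atTop (𝓝 0))
    (hψ₁ : Tendsto (fun s => s ^ (1 - k) * deriv ψ s) atTop (𝓝 0)) :
    Tendsto (fun t => t * deriv a₀ t / a₀ t) atTop (𝓝 k) := by
  have hlim := (hψ₁.const_add (a₁ * k)).div (hψ₀.const_add a₁) (by simpa using ha₁.ne')
  rw [add_zero, add_zero, mul_div_cancel_left₀ k ha₁.ne'] at hlim
  refine hlim.congr' ?_
  filter_upwards [eventually_gt_atTop 0] with t ht
  have htk : t ^ k ≠ 0 := (rpow_pos_of_pos ht k).ne'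
  have hnum : a₁ * k + t ^ (1 - k) * deriv ψ t = t * deriv a₀ t / t ^ k := by
    rw [(hasDerivAt_of_eq_mul_abs_rpow_add ha₀ (hψ t) ht).deriv, rpow_sub ht,
      rpow_sub_one ht.ne', rpow_one]
    field_simp
  have hden : a₁ + t ^ (-k) * ψ t = a₀ t / t ^ k := by
    rw [ha₀, abs_of_pos ht, rpow_neg ht.le]
    field_simp
  rw [Pi.div_apply, hnum, hden, div_div_div_cancel_right₀ htk]

end

theorem hasDerivAt_mul_sqrt_comp {a g : ℝ → ℝ} {a' s : ℝ} (ha : HasDerivAt a a' (g s))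
    (hpos : 0 < a (g s)) (hg : HasDerivAt g (1 / √(a (g s))) s) :
    HasDerivAt (fun s => g s * √(a (g s))) (1 + g s * a' / a (g s) / 2) s := by
  refine (hg.mul ((ha.comp s hg).sqrt hpos.ne')).congr_deriv ?_
  simp only [Function.comp_apply]
  field_simp
  rw [sq_sqrt hpos.le]
  ring

theorem neg_half_mul_add_sub_lt_zero {A a' g s p : ℝ} (hA : 0 < A)
    (h : g * √A < s * (p + g * a' / A / 2)) :
    -(1 / 2) * a' * s * g * (1 / √A) ^ 3 + g - p * s * (1 / √A) < 0 := by
  have hr : 0 < √A := sqrt_pos.2 hA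
  have hform : -(1 / 2) * a' * s * g * (1 / √A) ^ 3 + g - p * s * (1 / √A)
      = (g * √A - s * (p + g * a' / A / 2)) / √A := by
    have hsq : √A ^ 2 = A := sq_sqrt hA.le
    field_simp
    rw [pow_succ, hsq]
    ring
  rw [hform]
  exact div_neg_of_neg_of_pos (sub_neg.2 h) hr

theorem H2_eventually_negative_general
    (k a₁ : ℝ) (ha₁ : 0 < a₁)
    (ψ : ℝ → ℝ) (ν : ℝ) (hν : 0 < ν)
    (hψ : ContDiff ℝ 2 ψ) (hbound : ∀ s, ν ≤ ψ s)
    (p : ℝ) (hp : 1 < p)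
    (hcases :
      (2 < k ∧
        Tendsto (fun s : ℝ => s ^ ((2 - k) / 2) * ψ s) atTop (𝓝 0) ∧
        Tendsto (fun s : ℝ => s ^ ((4 - k) / 2) * deriv ψ s) atTop (𝓝 0)) ∨
      (0 < k ∧ k ≤ 2 ∧
        (∃ L > (0 : ℝ), Tendsto ψ atTop (𝓝 L)) ∧
        Tendsto (fun s : ℝ => s * deriv ψ s) atTop (𝓝 0)))
    (a₀ : ℝ → ℝ) (ha₀ : ∀ s, a₀ s = a₁ * |s| ^ k + ψ s)
    (g₀ : ℝ → ℝ)
    (hg₀ : ∀ s, HasDerivAt g₀ (1 / Real.sqrt (a₀ (g₀ s))) s)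
    (H₂ : ℝ → ℝ)
    (hH₂ : ∀ s, H₂ s = -(1 / 2) * deriv a₀ (g₀ s) * s * g₀ s * (deriv g₀ s) ^ 3
        + g₀ s - p * s * deriv g₀ s) :
    ∃ s₂ > (0 : ℝ), ∀ s ≥ s₂, H₂ s < 0 := by
  have hk : 0 < k := by rcases hcases with ⟨h, -⟩ | ⟨h, -⟩ <;> linarith
  have hψd : Differentiable ℝ ψ := hψ.differentiable (by norm_num)
  have ha₀pos : ∀ t, 0 < a₀ t := fun t => by
    rw [ha₀]
    exact add_pos_of_nonneg_of_pos (by positivity) (hν.trans_le (hbound t))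
  have ha₀cont : Continuous a₀ := by
    rw [funext ha₀]
    exact (continuous_const.mul (continuous_abs.rpow_const fun _ => Or.inr hk.le)).add
      hψ.continuous
  obtain ⟨hψ₀, hψ₁⟩ : Tendsto (fun s => s ^ (-k) * ψ s) atTop (𝓝 0) ∧
      Tendsto (fun s => s ^ (1 - k) * deriv ψ s) atTop (𝓝 0) := by
    rcases hcases with ⟨-, hψ₀, hψ₁⟩ | ⟨-, -, ⟨L, -, hψ₀⟩, hψ₁⟩
    · exact ⟨tendsto_rpow_mul_zero_of_lt hψ₀ (by linarith),
        tendsto_rpow_mul_zero_of_lt hψ₁ (by linarith)⟩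
    · exact ⟨tendsto_rpow_mul_zero_of_lt (a := 0) (by simpa using hψ₀) (by linarith),
        tendsto_rpow_mul_zero_of_lt (a := 1) (by simpa using hψ₁) (by linarith)⟩
  have hg₀top : Tendsto g₀ atTop atTop :=
    tendsto_atTop_of_hasDerivAt_comp (h := fun y => 1 / √(a₀ y))
      (continuous_const.div ha₀cont.sqrt fun y => (sqrt_pos.2 (ha₀pos y)).ne')
      (fun y => one_div_pos.2 (sqrt_pos.2 (ha₀pos y))) hg₀
  have hR : Tendsto (fun s => g₀ s * deriv a₀ (g₀ s) / a₀ (g₀ s)) atTop (𝓝 k) :=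
    (tendsto_mul_deriv_div_self ha₁ hψd ha₀ hψ₀ hψ₁).comp hg₀top
  have hQ : ∀ᶠ s in atTop, g₀ s * √(a₀ (g₀ s)) < ((1 + p) / 2 + k / 2) * s :=
    eventually_lt_mul_of_hasDerivAt_of_tendsto
      ((hg₀top.eventually_gt_atTop 0).mono fun s hs => hasDerivAt_mul_sqrt_comp
        (hasDerivAt_of_eq_mul_abs_rpow_add ha₀ (hψd _) hs).differentiableAt.hasDerivAt
        (ha₀pos _) (hg₀ s))
      ((hR.div_const 2).const_add 1) (by linarith)
  have hP : ∀ᶠ s in atTop,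
      (1 + p) / 2 + k / 2 < p + g₀ s * deriv a₀ (g₀ s) / a₀ (g₀ s) / 2 :=
    ((hR.div_const 2).const_add p).eventually_const_lt (by linarith)
  obtain ⟨s₀, hs₀⟩ := eventually_atTop.1 (hQ.and hP)
  refine ⟨max s₀ 1, by positivity, fun s hs => ?_⟩
  obtain ⟨hQs, hPs⟩ := hs₀ s (le_of_max_le_left hs)
  have hs0 : 0 < s := one_pos.trans_le (le_of_max_le_right hs)
  rw [hH₂, (hg₀ s).deriv]
  exact neg_half_mul_add_sub_lt_zero (ha₀pos _)
    (hQs.trans_le (by rw [mul_comm]; exact mul_le_mul_of_nonneg_left hPs.le hs0.le))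

theorem H2_eventually_negative
    (k a₁ : ℝ) (ha₁ : 0 < a₁)
    (ψ : ℝ → ℝ) (ν : ℝ) (hν : 0 < ν)
    (hψ : ContDiff ℝ 2 ψ) (hbound : ∀ s, ν ≤ ψ s)
    (p : ℝ) (hp : 1 < p)
    (hcases :
      (2 < k ∧
        Tendsto (fun s : ℝ => s ^ ((2 - k) / 2) * ψ s) atTop (𝓝 0) ∧
        Tendsto (fun s : ℝ => s ^ ((4 - k) / 2) * deriv ψ s) atTop (𝓝 0)) ∨
      (0 < k ∧ k ≤ 2 ∧
        (∃ L > (0 : ℝ), Tendsto ψ atTop (𝓝 L)) ∧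
        Tendsto (fun s : ℝ => s * deriv ψ s) atTop (𝓝 0)))
    (a₀ : ℝ → ℝ) (ha₀ : ∀ s, a₀ s = a₁ * |s| ^ k + ψ s)
    (g₀ : ℝ → ℝ)
    (hg₀ : ∀ s, HasDerivAt g₀ (1 / Real.sqrt (a₀ (g₀ s))) s) (hg₀0 : g₀ 0 = 0)
    (H₂ : ℝ → ℝ)
    (hH₂ : ∀ s, H₂ s = -(1 / 2) * deriv a₀ (g₀ s) * s * g₀ s * (deriv g₀ s) ^ 3
        + g₀ s - p * s * deriv g₀ s) :
    ∃ s₂ > (0 : ℝ), ∀ s ≥ s₂, H₂ s < 0 :=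
  H2_eventually_negative_general k a₁ ha₁ ψ ν hν hψ hbound p hp hcases a₀ ha₀ g₀ hg₀ H₂ hH₂
end
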